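/- arXiv:1503.05990 — 2 statements merged into one kernel-verified Lean document; each statement's English description precedes it below -/
import Mathlib

section
/- Fix p ∈ ℝ and a measure ν on ℝ with ∫ (e^{p²z/2} − 1) dν(z) < ∞ and ν supported on (0,∞). Consider the operator L₁f(y) = −y f'(y) + ∫ (f(y+z) − f(y)) dν(z) and the potential V(y) = (1/2) y p². Then the function f(y) = exp((p²/2) y) satisfies the eigenvalue equation L₁ f(y) + V(y) f(y) = λ f(y) for all y ∈ ℝ, with eigenvalue λ = ∫ (e^{p²z/2} − 1) dν(z). -/
open MeasureTheory Real

theorem deriv_exp_const_mul (c y : ℝ) :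
    deriv (fun y => exp (c * y)) y = c * exp (c * y) := by
  simpa only [iteratedDeriv_one, pow_one] using congrFun (iteratedDeriv_exp_const_mul 1 c) y

theorem integral_exp_shift_sub (c y : ℝ) (ν : Measure ℝ) :
    ∫ z, (exp (c * (y + z)) - exp (c * y)) ∂ν = exp (c * y) * ∫ z, (exp (c * z) - 1) ∂ν := by
  rw [← integral_const_mul]
  congr 1 with z
  rw [mul_sub, mul_one, ← exp_add, mul_add]

theorem stmt_3_general
    (p : ℝ) (ν : Measure ℝ) :
    ∀ y : ℝ,
      (-y * deriv (fun y => Real.exp (p ^ 2 / 2 * y)) y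
          + ∫ z, (Real.exp (p ^ 2 / 2 * (y + z)) - Real.exp (p ^ 2 / 2 * y)) ∂ν)
        + (1 / 2 * y * p ^ 2) * Real.exp (p ^ 2 / 2 * y)
      = (∫ z, (Real.exp (p ^ 2 * z / 2) - 1) ∂ν) * Real.exp (p ^ 2 / 2 * y) := by
  intro y
  simp_rw [deriv_exp_const_mul, integral_exp_shift_sub, mul_div_right_comm (p ^ 2) _ 2]
  ring

/-- Explicit solution of the eigenvalue problem for the BNS stochastic
volatility model: `f(y) = exp(p²y/2)` satisfies
`L₁ f + V f = λ f` with `λ = ∫ (e^{p²z/2} − 1) dν`. -/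
theorem stmt_3
    (p : ℝ) (ν : Measure ℝ)
    (hsupp : ν (Set.Iic 0) = 0)
    (hint : Integrable (fun z => Real.exp (p ^ 2 * z / 2) - 1) ν) :
    ∀ y : ℝ,
      (-y * deriv (fun y => Real.exp (p ^ 2 / 2 * y)) y
          + ∫ z, (Real.exp (p ^ 2 / 2 * (y + z)) - Real.exp (p ^ 2 / 2 * y)) ∂ν)
        + (1 / 2 * y * p ^ 2) * Real.exp (p ^ 2 / 2 * y)
      = (∫ z, (Real.exp (p ^ 2 * z / 2) - 1) ∂ν) * Real.exp (p ^ 2 / 2 * y) :=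
  stmt_3_general p ν
end

section
/- Let a, b > 0, H(p) = a·ln(2b/(2b−p²)) for p² < 2b (and +∞ otherwise), and for q > 0 define L(q) = −a + √(a² + 2bq²) − a·ln(2b) + a·ln( (−2a² + 2a√(a² + 2bq²))/q² ). Then L(q) = sup_{|p|<√(2b)} (pq − H(p)) for every q > 0; i.e., L is the Legendre transform of H on (0, ∞). -/
/-!
`H(p) = a log (2b / (2b - p²))` is convex on `p² < 2b`, so `p ↦ p q - H(p)` is maximised at the
critical point `P` where `q = H'(P) = 2aP / (2b - P²)`, i.e. `q P² + 2aP - 2bq = 0`, whose positive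
root is `P = (√(a² + 2bq²) - a) / q`. The maximality of `P` follows from the tangent-line bound
`log u ≤ log v + (u - v) / v` applied to `u = 2b - p²`, `v = 2b - P²`, which leaves the defect
`a (p - P)² ≥ 0`. Evaluating `P q - H(P)` gives the explicit formula, because `P q = √(a² + 2bq²) - a`
and `2b - P² = (2a√(a² + 2bq²) - 2a²) / q²`.
-/

open Real

namespace GammaBDLP

noncomputable def hamiltonian (a b p : ℝ) : ℝ := a * log (2 * b / (2 * b - p ^ 2))

noncomputable def criticalMomentum (a b q : ℝ) : ℝ := (√(a ^ 2 + 2 * b * q ^ 2) - a) / q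

theorem log_le_log_add_sub_div {u v : ℝ} (hu : 0 < u) (hv : 0 < v) :
    log u ≤ log v + (u - v) / v := by
  have h := log_le_sub_one_of_pos (div_pos hu hv)
  rw [log_div hu.ne' hv.ne', div_sub_one hv.ne'] at h
  linarith

-- The first-order condition `q = H'(P)` with denominators cleared.
theorem mul_sub_sq_criticalMomentum {a b q : ℝ} (hb : 0 ≤ b) (hq : q ≠ 0) :
    q * (2 * b - criticalMomentum a b q ^ 2) = 2 * a * criticalMomentum a b q := by
  have hs : √(a ^ 2 + 2 * b * q ^ 2) ^ 2 = a ^ 2 + 2 * b * q ^ 2 := sq_sqrt (by positivity)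
  unfold criticalMomentum
  generalize √(a ^ 2 + 2 * b * q ^ 2) = s at hs ⊢
  field_simp
  linear_combination -hs

theorem criticalMomentum_pos {a b q : ℝ} (ha : 0 ≤ a) (hb : 0 < b) (hq : 0 < q) :
    0 < criticalMomentum a b q := by
  have has : a < √(a ^ 2 + 2 * b * q ^ 2) := by
    rw [lt_sqrt ha]
    nlinarith [mul_pos hb (pow_pos hq 2)]
  exact div_pos (by linarith) hq

theorem sq_criticalMomentum_lt {a b q : ℝ} (ha : 0 < a) (hb : 0 < b) (hq : 0 < q) :
    criticalMomentum a b q ^ 2 < 2 * b := by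
  have hcrit := mul_sub_sq_criticalMomentum (a := a) hb.le hq.ne'
  have hP := criticalMomentum_pos ha.le hb hq
  have : 0 < q * (2 * b - criticalMomentum a b q ^ 2) := by rw [hcrit]; positivity
  nlinarith [(pos_iff_pos_of_mul_pos this).mp hq]

theorem sub_hamiltonian_le_of_critical {a b q p P : ℝ} (ha : 0 ≤ a) (hP : P ^ 2 < 2 * b)
    (hcrit : q * (2 * b - P ^ 2) = 2 * a * P) (hp : p ^ 2 < 2 * b) :
    p * q - hamiltonian a b p ≤ P * q - hamiltonian a b P := by
  have hv : 0 < 2 * b - P ^ 2 := by linarith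
  have hu : 0 < 2 * b - p ^ 2 := by linarith
  have h2b : 0 < 2 * b := by nlinarith
  have hdiff : hamiltonian a b p - hamiltonian a b P
      = a * (log (2 * b - P ^ 2) - log (2 * b - p ^ 2)) := by
    unfold hamiltonian
    rw [log_div h2b.ne' hu.ne', log_div h2b.ne' hv.ne']
    ring
  have htangent : a * ((p ^ 2 - P ^ 2) / (2 * b - P ^ 2))
      ≤ a * (log (2 * b - P ^ 2) - log (2 * b - p ^ 2)) := by
    have := log_le_log_add_sub_div hu hv
    apply mul_le_mul_of_nonneg_left _ ha
    rw [show (2 * b - p ^ 2 - (2 * b - P ^ 2)) = -(p ^ 2 - P ^ 2) by ring, neg_div] at this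
    linarith
  have hsecant : (p - P) * q ≤ a * ((p ^ 2 - P ^ 2) / (2 * b - P ^ 2)) := by
    rw [← mul_div_assoc, le_div_iff₀ hv, mul_assoc, hcrit]
    nlinarith [mul_nonneg ha (sq_nonneg (p - P))]
  linarith

theorem criticalMomentum_mul_sub_hamiltonian {a b q : ℝ} (ha : 0 < a) (hb : 0 < b) (hq : 0 < q) :
    criticalMomentum a b q * q - hamiltonian a b (criticalMomentum a b q)
      = -a + √(a ^ 2 + 2 * b * q ^ 2) - a * log (2 * b)
        + a * log ((-2 * a ^ 2 + 2 * a * √(a ^ 2 + 2 * b * q ^ 2)) / q ^ 2) := by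
  set P := criticalMomentum a b q
  have hv : 0 < 2 * b - P ^ 2 := sub_pos.mpr (sq_criticalMomentum_lt ha hb hq)
  have hPq : P * q = √(a ^ 2 + 2 * b * q ^ 2) - a := div_mul_cancel₀ _ hq.ne'
  have hgap : 2 * b - P ^ 2 = (-2 * a ^ 2 + 2 * a * √(a ^ 2 + 2 * b * q ^ 2)) / q ^ 2 := by
    rw [eq_div_iff (by positivity)]
    linear_combination q * mul_sub_sq_criticalMomentum (a := a) hb.le hq.ne' + 2 * a * hPq
  unfold hamiltonian
  rw [log_div (by positivity) hv.ne', ← hgap, hPq]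
  ring

end GammaBDLP

open GammaBDLP in
/-- Legendre transform of the gamma-BDLP Hamiltonian: for `q > 0`,
`L(q) = sup_{|p|<√(2b)} (pq − H(p))` with the stated explicit formula. -/
theorem stmt_6 (a b : ℝ) (ha : 0 < a) (hb : 0 < b) (q : ℝ) (hq : 0 < q) :
    IsLUB {v : ℝ | ∃ p : ℝ, p ^ 2 < 2 * b ∧
        v = p * q - a * Real.log (2 * b / (2 * b - p ^ 2))}
      (-a + Real.sqrt (a ^ 2 + 2 * b * q ^ 2) - a * Real.log (2 * b)
        + a * Real.log
            ((-2 * a ^ 2 + 2 * a * Real.sqrt (a ^ 2 + 2 * b * q ^ 2)) / q ^ 2)) := by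
  have hP := sq_criticalMomentum_lt ha hb hq
  refine IsGreatest.isLUB ⟨⟨criticalMomentum a b q, hP,
    (criticalMomentum_mul_sub_hamiltonian ha hb hq).symm⟩, ?_⟩
  rintro v ⟨p, hp, rfl⟩
  rw [← criticalMomentum_mul_sub_hamiltonian ha hb hq]
  exact sub_hamiltonian_le_of_critical ha.le hP
    (mul_sub_sq_criticalMomentum hb.le hq.ne') hp
end
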